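/- For any skew shape A, the partition rows(A) (the weakly decreasing rearrangement of the row lengths of A) lies in the support of A, and it is the least dominant element of the support: every partition λ in the support of A satisfies rows(A) ⊴ λ. Explicitly, the filling of A constructed by repeatedly filling the rightmost not-yet-filled box of each non-empty row with the entries 1, 2, … from top to bottom is a Littlewood–Richardson filling of A with content rows(A). -/

import Mathlib

open Finset

/-- The weakly decreasing rearrangement of a finite sequence (list) of natural numbers,
i.e. the partition obtained by sorting its parts into weakly decreasing order. -/
def sortDesc (l : List ℕ) : List ℕ := l.mergeSort (fun a b => b ≤ a)

/-- The (extended) dominance order on partitions, represented as weakly decreasing lists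
of natural numbers (parts beyond the length of the list are taken to be `0`):
`Dom a b` means `a ⊴ b`, i.e. `a₁ + ⋯ + a_k ≤ b₁ + ⋯ + b_k` for all `k`. -/
def Dom (a b : List ℕ) : Prop := ∀ k : ℕ, (a.take k).sum ≤ (b.take k).sum

/-- The conjugate (transpose) of a partition given as a list of natural numbers:
the `j`-th entry (0-indexed) is the number of parts that are `> j`. -/
def conj (l : List ℕ) : List ℕ :=
  (List.range (l.foldr max 0)).map (fun j => (l.filter (fun x => j < x)).length)

/-- A skew shape `λ/μ`: a pair of Young diagrams `μ ⊆ λ`. -/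
structure SkewShape where
  outer : YoungDiagram
  inner : YoungDiagram
  le : inner ≤ outer

namespace SkewShape

/-- The cells (boxes) of a skew shape: boxes of the outer diagram not in the inner one. -/
def cells (A : SkewShape) : Finset (ℕ × ℕ) := A.outer.cells \ A.inner.cells

/-- The number of rows of (the outer shape of) a skew shape. -/
def numRows (A : SkewShape) : ℕ := A.outer.colLen 0

/-- The number of columns of (the outer shape of) a skew shape. -/
def numCols (A : SkewShape) : ℕ := A.outer.rowLen 0

/-- `A.overlap k i` is the number of columns occupied in common by the `k` consecutive
rows `i, i+1, …, i+k-1` of the skew shape `A` (rows indexed from 0). -/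
def overlap (A : SkewShape) (k i : ℕ) : ℕ :=
  ((Finset.range A.numCols).filter (fun j => ∀ t, t < k → (i + t, j) ∈ A.cells)).card

/-- `rows_k(A)`: the weakly decreasing rearrangement of the row-overlap numbers
`(overlap k 0, overlap k 1, …)`; zero parts are discarded (a partition is identified
with its zero-padded versions).  `A.rowsK 1` is the partition of row lengths of `A`. -/
def rowsK (A : SkewShape) (k : ℕ) : List ℕ :=
  sortDesc (((List.range (A.numRows + 1 - k)).map (A.overlap k)).filter (fun x => 0 < x))

/-- The transpose (conjugate) of a skew shape. -/
def transpose (A : SkewShape) : SkewShape :=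
  ⟨A.outer.transpose, A.inner.transpose, YoungDiagram.transpose_mono A.le⟩

/-- `cols_l(A)`: the weakly decreasing rearrangement of the column-overlap numbers of `A`;
`A.colsK 1` is the partition of column lengths of `A`. -/
def colsK (A : SkewShape) (l : ℕ) : List ℕ := A.transpose.rowsK l

/-- `rects k l A` is the number of `k × l` rectangular subdiagrams (contiguous `k × l`
blocks of boxes) contained inside the skew shape `A`, recorded by the position of
their top-left corner. -/
def rects (A : SkewShape) (k l : ℕ) : ℕ :=
  (((Finset.range A.numRows) ×ˢ (Finset.range A.numCols)).filter
    (fun p => ∀ t, t < k → ∀ u, u < l → (p.1 + t, p.2 + u) ∈ A.cells)).card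

end SkewShape

/-- A semistandard Young tableau of skew shape `A`: a filling of the boxes of `A`
with positive integers, weakly increasing along rows and strictly increasing down
columns (entries outside `A` are recorded as `0`). -/
structure SkewSsyt (A : SkewShape) where
  entry : ℕ → ℕ → ℕ
  pos : ∀ i j, (i, j) ∈ A.cells → 1 ≤ entry i j
  zeros : ∀ i j, (i, j) ∉ A.cells → entry i j = 0
  row_weak : ∀ i j1 j2, j1 ≤ j2 → (i, j1) ∈ A.cells → (i, j2) ∈ A.cells →
      entry i j1 ≤ entry i j2
  col_strict : ∀ i1 i2 j, i1 < i2 → (i1, j) ∈ A.cells → (i2, j) ∈ A.cells →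
      entry i1 j < entry i2 j

/-- The number of boxes of `T` filled with the entry `v`. -/
def contentCount {A : SkewShape} (T : SkewSsyt A) (v : ℕ) : ℕ :=
  (A.cells.filter (fun c => T.entry c.1 c.2 = v)).card

/-- `T` has content `ν` (a partition written as a list, 0-indexed: `ν.getD v 0` is the
`(v+1)`-st part): the number of entries equal to `v + 1` is the `(v+1)`-st part of `ν`. -/
def HasContent {A : SkewShape} (T : SkewSsyt A) (ν : List ℕ) : Prop :=
  ∀ v : ℕ, contentCount T (v + 1) = ν.getD v 0

/-- `readBefore c c'` : the box `c` comes strictly before the box `c'` in the reverse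
reading order (rows top to bottom, each row read right to left). -/
def readBefore (c c' : ℕ × ℕ) : Prop := c.1 < c'.1 ∨ (c.1 = c'.1 ∧ c'.2 < c.2)

instance (c c' : ℕ × ℕ) : Decidable (readBefore c c') := by
  unfold readBefore; infer_instance

/-- `T` is a Littlewood–Richardson filling: its reverse reading word is a lattice word,
i.e. at every box `c` carrying an entry `v + 2`, the number of occurrences of `v + 2`
read so far (weakly up to `c`) is at most the number of occurrences of `v + 1` read
strictly before `c`. -/
def IsLR {A : SkewShape} (T : SkewSsyt A) : Prop :=
  ∀ c ∈ A.cells, ∀ v : ℕ, T.entry c.1 c.2 = v + 2 →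
    (A.cells.filter (fun c' => T.entry c'.1 c'.2 = v + 2 ∧ (readBefore c' c ∨ c' = c))).card ≤
    (A.cells.filter (fun c' => T.entry c'.1 c'.2 = v + 1 ∧ readBefore c' c)).card

/-- The support of the skew Schur function `s_A`: by the Littlewood–Richardson rule,
the set of partitions `ν` (weakly decreasing lists) admitting an LR filling of `A`
of content `ν`, i.e. those `ν` with `s_ν` appearing with nonzero coefficient in `s_A`. -/
def SkewShape.support (A : SkewShape) : Set (List ℕ) :=
  { ν | ν.Pairwise (· ≥ ·) ∧ ∃ T : SkewSsyt A, IsLR T ∧ HasContent T ν }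

/-- The coefficient of the Schur function `s_ν` in the Schur expansion of `s_A`:
by the Littlewood–Richardson rule, the number of LR fillings of `A` of content `ν`. -/
noncomputable def lrCoeff (A : SkewShape) (ν : List ℕ) : ℕ :=
  Nat.card { T : SkewSsyt A // IsLR T ∧ HasContent T ν }

/-- `s_A − s_B` is Schur-positive: every coefficient in the Schur expansion of the
difference is nonnegative, i.e. (by the LR rule) each LR coefficient of `B` is at most
the corresponding one of `A`. -/
def SchurPositiveDiff (A B : SkewShape) : Prop :=
  ∀ ν : List ℕ, ν.Pairwise (· ≥ ·) → lrCoeff B ν ≤ lrCoeff A ν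

/-- The skew Schur function `s_A = Σ_T x^T`, as a formal power series in the variables
`x_0, x_1, x_2, …` (variable `x_v` recording entries equal to `v + 1`): the coefficient
of the monomial with exponents `d` is the number of SSYT of shape `A` and content `d`. -/
noncomputable def skewSchur (A : SkewShape) : MvPowerSeries ℕ ℤ :=
  fun d => (Nat.card { T : SkewSsyt A // ∀ v : ℕ, contentCount T (v + 1) = d v } : ℤ)

/-- The boxes remaining after deleting the top box of every non-empty column of `A`:
a box survives iff there is a box of `A` directly above it. -/
def trimCells (A : SkewShape) : Finset (ℕ × ℕ) :=
  A.cells.filter (fun c => 1 ≤ c.1 ∧ (c.1 - 1, c.2) ∈ A.cells)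

/-- The set of boxes of the skew shape `A ∗ B`, obtained by positioning `B` immediately
below and to the left of `A` so that `A` and `B` share no common row or column. -/
def starCells (A B : SkewShape) : Finset (ℕ × ℕ) :=
  A.cells.image (fun c => (c.1, c.2 + B.numCols)) ∪
    B.cells.image (fun c => (c.1 + A.numRows, c.2))

/-- The straight shape (partition) `μ`, viewed as the skew shape `μ/(0)`. -/
def ofYD (μ : YoungDiagram) : SkewShape := ⟨μ, ⊥, bot_le⟩

/-- The list of parts `(μ_k, μ_{k+1}, …, μ_l)` (1-indexed) of a partition `μ` given as a
Young diagram, parts beyond the length of `μ` being `0`. -/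
def tailParts (μ : YoungDiagram) (k l : ℕ) : List ℕ :=
  (List.range (l + 1 - k)).map (fun t => μ.rowLen (k - 1 + t))

/-!
The filling of the statement gives the `q`-th box from the right of row `i` the entry one plus the
number of earlier rows with at least `q` boxes. Its boxes with entry `v + 1` correspond to the `q`
for which more than `v` rows have at least `q` boxes, so its content is the conjugate of the
conjugate of `rows(A)`; and every `q` carrying a `v + 2` in the rows up to row `i` also carries a
`v + 1` in the rows above row `i`, which gives the lattice condition.

Conversely, let `T` be an LR filling. Applying the lattice condition to the rows above row `i`
together with the entries `≥ v + 2` of row `i` (an initial segment of the reading order, as rows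
weakly increase) and telescoping in `v`, row `i` has no more entries `> k` than the rows above it
have entries `k`. So passing from the first `i` rows with entries `≤ k` to the first `i + 1` rows
with entries `≤ k + 1` gains at least the length of row `i`, and by induction any `k` row lengths
sum to at most the number of entries `≤ k`, which is `λ₁ + ⋯ + λ_k`.
-/

lemma sortDesc_pairwise (l : List ℕ) : (sortDesc l).Pairwise (· ≥ ·) :=
  (List.pairwise_mergeSort (le := fun a b : ℕ => decide (b ≤ a))
    (fun a b c hab hbc => by simp at *; omega) (fun a b => by simp; omega) l).imp
    fun h => by simpa using h

lemma List.sum_take_eq_sum_range_getD (l : List ℕ) (k : ℕ) :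
    (l.take k).sum = ∑ v ∈ Finset.range k, l.getD v 0 := by
  induction l generalizing k with
  | nil => simp
  | cons a t ih =>
    cases k with
    | zero => simp
    | succ k => rw [List.take_succ_cons, List.sum_cons, ih, Finset.sum_range_succ', add_comm]; rfl

lemma le_getD_iff_lt_countP {s : List ℕ} (hs : s.Pairwise (· ≥ ·)) (v : ℕ) {q : ℕ}
    (hq : 1 ≤ q) : q ≤ s.getD v 0 ↔ v < s.countP (q ≤ ·) := by
  induction s generalizing v with
  | nil => simp; omega
  | cons a t ih =>
    have hat : ∀ b ∈ t, b ≤ a := fun b hb => List.rel_of_pairwise_cons hs hb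
    by_cases hqa : q ≤ a
    · cases v with
      | zero => simp [hqa]
      | succ v => simpa [hqa] using ih hs.of_cons v
    · have hzero : (a :: t).countP (q ≤ ·) = 0 :=
        List.countP_eq_zero.2 fun b hb => by
          rcases List.mem_cons.1 hb with rfl | hb
          · simpa using hqa
          · simpa using lt_of_le_of_lt (hat b hb) (not_le.1 hqa)
      have hget : (a :: t).getD v 0 ≤ a := by
        rcases lt_or_ge v (a :: t).length with hv | hv
        · rw [List.getD_eq_getElem _ _ hv]
          rcases List.mem_cons.1 (List.getElem_mem hv) with h | h
          · exact h.le
          · exact hat _ h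
        · rw [List.getD_eq_default _ _ hv]; omega
      omega

/-- A decreasing list is the conjugate of its conjugate. -/
lemma getD_eq_card_filter_lt_countP {s : List ℕ} (hs : s.Pairwise (· ≥ ·)) {C : ℕ}
    (hC : ∀ x ∈ s, x ≤ C) (v : ℕ) :
    s.getD v 0 = #{q ∈ Icc 1 C | v < s.countP (q ≤ ·)} := by
  have hget : s.getD v 0 ≤ C := by
    rcases lt_or_ge v s.length with hv | hv
    · rw [List.getD_eq_getElem _ _ hv]; exact hC _ (List.getElem_mem hv)
    · rw [List.getD_eq_default _ _ hv]; omega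
  have : ({q ∈ Icc 1 C | v < s.countP (q ≤ ·)} : Finset ℕ) = Icc 1 (s.getD v 0) := by
    ext q
    simp only [mem_filter, mem_Icc]
    constructor
    · rintro ⟨⟨hq, -⟩, h⟩; exact ⟨hq, (le_getD_iff_lt_countP hs v hq).2 h⟩
    · rintro ⟨hq, h⟩; exact ⟨⟨hq, h.trans hget⟩, (le_getD_iff_lt_countP hs v hq).1 h⟩
  rw [this, Nat.card_Icc]; omega

lemma Nat.exists_lt_count_eq {p : ℕ → Prop} [DecidablePred p] {m n : ℕ}
    (h : m < Nat.count p n) :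
    ∃ i < n, p i ∧ Nat.count p i = m := by
  have hcard : ∀ hf : (Set.ofPred p).Finite, m < #hf.toFinset :=
    fun hf => h.trans_le (Nat.count_le_card hf n)
  exact ⟨Nat.nth p m, Nat.nth_lt_of_lt_count h, Nat.nth_mem m hcard, Nat.count_nth hcard⟩

lemma Finset.card_filter_eq_add {α : Type*} (s : Finset α) {p q r : α → Prop}
    [DecidablePred p] [DecidablePred q] [DecidablePred r]
    (h : ∀ a ∈ s, p a ↔ q a ∨ r a) (hd : ∀ a ∈ s, q a → ¬r a) :
    #{a ∈ s | p a} = #{a ∈ s | q a} + #{a ∈ s | r a} := by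
  simp only [card_filter, ← sum_add_distrib]
  refine sum_congr rfl fun a ha => ?_
  have := hd a ha
  by_cases hq : q a <;> by_cases hr : r a <;> simp_all

namespace SkewShape

def rowLength (A : SkewShape) (i : ℕ) : ℕ := A.outer.rowLen i - A.inner.rowLen i

variable {A : SkewShape}

lemma mem_cells_iff {i j : ℕ} :
    (i, j) ∈ A.cells ↔ A.inner.rowLen i ≤ j ∧ j < A.outer.rowLen i := by
  simp only [cells, mem_sdiff, YoungDiagram.mem_cells, YoungDiagram.mem_iff_lt_rowLen]
  omega

lemma fst_lt_numRows {c : ℕ × ℕ} (h : c ∈ A.cells) : c.1 < A.numRows := by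
  have hc : c ∈ A.outer := (mem_sdiff.1 h).1
  exact (YoungDiagram.mem_iff_lt_colLen.1 hc).trans_le (A.outer.colLen_anti 0 c.2 c.2.zero_le)

lemma outer_rowLen_le_numCols (i : ℕ) : A.outer.rowLen i ≤ A.numCols :=
  A.outer.rowLen_anti 0 i i.zero_le

lemma filter_cells_row_eq (i : ℕ) :
    {c ∈ A.cells | c.1 = i} = (Ico (A.inner.rowLen i) (A.outer.rowLen i)).image (Prod.mk i) := by
  ext ⟨i', j⟩
  simp only [mem_filter, mem_image, mem_Ico, Prod.mk.injEq]
  constructor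
  · rintro ⟨hc, rfl⟩; exact ⟨j, mem_cells_iff.1 hc, rfl, rfl⟩
  · rintro ⟨j, hj, rfl, rfl⟩; exact ⟨mem_cells_iff.2 hj, rfl⟩

lemma card_filter_cells_row (i : ℕ) : #{c ∈ A.cells | c.1 = i} = A.rowLength i := by
  rw [filter_cells_row_eq, card_image_of_injective _ (Prod.mk_right_injective i), Nat.card_Ico]
  rfl

lemma overlap_one (i : ℕ) : A.overlap 1 i = A.rowLength i := by
  rw [overlap, rowLength, ← Nat.card_Ico]
  congr 1
  ext j
  simp only [mem_filter, mem_range, mem_Ico, Nat.lt_one_iff, forall_eq, add_zero,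
    mem_cells_iff]
  have := outer_rowLen_le_numCols (A := A) i
  omega

lemma rowsK_one_perm :
    (A.rowsK 1).Perm (((List.range A.numRows).map A.rowLength).filter (0 < ·)) := by
  have : (List.range A.numRows).map (A.overlap 1) = (List.range A.numRows).map A.rowLength :=
    List.map_congr_left fun i _ => overlap_one i
  simp only [rowsK, sortDesc, Nat.add_sub_cancel, this]
  exact List.mergeSort_perm _ _

lemma rowsK_one_pairwise : (A.rowsK 1).Pairwise (· ≥ ·) := sortDesc_pairwise _

lemma le_numCols_of_mem_rowsK_one {x : ℕ} (hx : x ∈ A.rowsK 1) : x ≤ A.numCols := by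
  obtain ⟨i, -, rfl⟩ := List.mem_map.1 (List.mem_of_mem_filter (rowsK_one_perm.mem_iff.1 hx))
  exact (Nat.sub_le _ _).trans (outer_rowLen_le_numCols i)

lemma countP_rowsK_one {q : ℕ} (hq : 1 ≤ q) :
    (A.rowsK 1).countP (q ≤ ·) = Nat.count (q ≤ A.rowLength ·) A.numRows := by
  rw [rowsK_one_perm.countP_eq, List.countP_filter, List.countP_map, Nat.count]
  refine List.countP_congr fun i _ => ?_
  simp only [Function.comp, Bool.and_eq_true, decide_eq_true_eq]
  omega

end SkewShape

open SkewShape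

/-- In round `q` the filling of the statement puts `1, 2, …` from top to bottom into the `q`-th
box from the right of each row having at least `q` boxes; that box is `(i, outer.rowLen i - q)`. -/
def canonicalEntry (A : SkewShape) (i j : ℕ) : ℕ :=
  if (i, j) ∈ A.cells then Nat.count (A.outer.rowLen i - j ≤ A.rowLength ·) i + 1 else 0

lemma canonicalEntry_of_mem {A : SkewShape} {i j : ℕ} (h : (i, j) ∈ A.cells) :
    canonicalEntry A i j = Nat.count (A.outer.rowLen i - j ≤ A.rowLength ·) i + 1 :=
  if_pos h

def canonicalFilling (A : SkewShape) : SkewSsyt A where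
  entry := canonicalEntry A
  pos i j h := by rw [canonicalEntry_of_mem h]; omega
  zeros i j h := if_neg h
  row_weak i j₁ j₂ hj h₁ h₂ := by
    rw [canonicalEntry_of_mem h₁, canonicalEntry_of_mem h₂, add_le_add_iff_right]
    exact Nat.count_mono_left fun _ _ h => by omega
  col_strict i₁ i₂ j hi h₁ h₂ := by
    have hrow := A.outer.rowLen_anti i₁ i₂ hi.le
    have hc₁ := mem_cells_iff.1 h₁
    rw [canonicalEntry_of_mem h₁, canonicalEntry_of_mem h₂, add_lt_add_iff_right]
    calc Nat.count (A.outer.rowLen i₁ - j ≤ A.rowLength ·) i₁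
        ≤ Nat.count (A.outer.rowLen i₂ - j ≤ A.rowLength ·) i₁ :=
          Nat.count_mono_left fun _ _ h => by omega
      _ < Nat.count (A.outer.rowLen i₂ - j ≤ A.rowLength ·) i₂ :=
          Nat.count_strict_mono (by simp only [rowLength]; omega) hi

lemma canonicalFilling_entry (A : SkewShape) (i j : ℕ) :
    (canonicalFilling A).entry i j = canonicalEntry A i j := rfl

/-- The bijection records the distance `q` of a box from the right end of its row. -/
lemma card_filter_canonicalFilling_entry_eq (A : SkewShape) (n v : ℕ) :
    #{c ∈ A.cells | c.1 < n ∧ (canonicalFilling A).entry c.1 c.2 = v + 1}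
      = #{q ∈ Icc 1 A.numCols | v < Nat.count (q ≤ A.rowLength ·) n} := by
  refine card_bij (fun c _ => A.outer.rowLen c.1 - c.2) ?_ ?_ ?_
  · rintro ⟨i, j⟩ hc
    obtain ⟨hc, hin, he⟩ := mem_filter.1 hc
    have hj := mem_cells_iff.1 hc
    rw [canonicalFilling_entry, canonicalEntry_of_mem hc, add_left_inj] at he
    simp only [mem_filter, mem_Icc]
    refine ⟨⟨by omega, (Nat.sub_le _ _).trans (outer_rowLen_le_numCols i)⟩, ?_⟩
    exact he ▸ Nat.count_strict_mono (by simp only [rowLength]; omega) hin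
  · rintro ⟨i₁, j₁⟩ h₁ ⟨i₂, j₂⟩ h₂
      (hq : A.outer.rowLen i₁ - j₁ = A.outer.rowLen i₂ - j₂)
    obtain ⟨hc₁, -, he₁⟩ := mem_filter.1 h₁
    obtain ⟨hc₂, -, he₂⟩ := mem_filter.1 h₂
    have hj₁ := mem_cells_iff.1 hc₁
    have hj₂ := mem_cells_iff.1 hc₂
    rw [canonicalFilling_entry, canonicalEntry_of_mem hc₁] at he₁
    rw [canonicalFilling_entry, canonicalEntry_of_mem hc₂, ← hq] at he₂
    have hi : i₁ = i₂ :=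
      Nat.count_injective (p := (A.outer.rowLen i₁ - j₁ ≤ A.rowLength ·))
      (by simp only [rowLength]; omega) (by simp only [rowLength]; omega) (by omega)
    subst hi
    simp only [Prod.mk.injEq, true_and]
    omega
  · intro q hq
    simp only [mem_filter, mem_Icc] at hq
    obtain ⟨⟨hq₁, -⟩, hv⟩ := hq
    obtain ⟨i, hin, hqi, hcount⟩ := Nat.exists_lt_count_eq hv
    have hqi' : q ≤ A.outer.rowLen i - A.inner.rowLen i := hqi
    have hc : (i, A.outer.rowLen i - q) ∈ A.cells := mem_cells_iff.2 (by omega)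
    have hq_eq : A.outer.rowLen i - (A.outer.rowLen i - q) = q := by omega
    refine ⟨(i, A.outer.rowLen i - q), ?_, hq_eq⟩
    refine mem_filter.2 ⟨hc, hin, ?_⟩
    rw [canonicalFilling_entry, canonicalEntry_of_mem hc, hq_eq, hcount]

lemma canonicalFilling_hasContent (A : SkewShape) :
    HasContent (canonicalFilling A) (A.rowsK 1) := by
  intro v
  rw [getD_eq_card_filter_lt_countP rowsK_one_pairwise (fun _ => le_numCols_of_mem_rowsK_one),
    contentCount, ← filter_congr (p := fun c => c.1 < A.numRows ∧ _)
      fun c hc => and_iff_right (fst_lt_numRows hc), card_filter_canonicalFilling_entry_eq]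
  exact congrArg card (filter_congr fun q hq => by rw [countP_rowsK_one (mem_Icc.1 hq).1])

lemma fst_le_of_readBefore_or_eq {c c' : ℕ × ℕ} (h : readBefore c' c ∨ c' = c) :
    c'.1 ≤ c.1 := by
  rcases h with (h | ⟨h, -⟩) | rfl <;> omega

lemma canonicalFilling_isLR (A : SkewShape) : IsLR (canonicalFilling A) := by
  rintro ⟨i, j⟩ - v -
  calc _ ≤ #{c ∈ A.cells | c.1 < i + 1 ∧ (canonicalFilling A).entry c.1 c.2 = v + 1 + 1} :=
        card_le_card <| monotone_filter_right _ fun c _ ⟨he, hc⟩ => ⟨by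
          have := fst_le_of_readBefore_or_eq hc; omega, he⟩
    _ = #{q ∈ Icc 1 A.numCols | v + 1 < Nat.count (q ≤ A.rowLength ·) (i + 1)} :=
        card_filter_canonicalFilling_entry_eq A (i + 1) (v + 1)
    _ ≤ #{q ∈ Icc 1 A.numCols | v < Nat.count (q ≤ A.rowLength ·) i} :=
        card_le_card <| monotone_filter_right _ fun q _ h => by
          rw [Nat.count_succ] at h; split_ifs at h <;> omega
    _ = #{c ∈ A.cells | c.1 < i ∧ (canonicalFilling A).entry c.1 c.2 = v + 1} :=
        (card_filter_canonicalFilling_entry_eq A i v).symm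
    _ ≤ _ := card_le_card <| monotone_filter_right _ fun c _ ⟨hc, he⟩ => ⟨he, Or.inl hc⟩

lemma exists_last_read {s : Finset (ℕ × ℕ)} (hs : s.Nonempty) :
    ∃ c ∈ s, ∀ c' ∈ s, readBefore c' c ∨ c' = c := by
  obtain ⟨c, hc, hmax⟩ := s.exists_max_image (fun c => toLex (c.1, OrderDual.toDual c.2)) hs
  refine ⟨c, hc, fun c' hc' => ?_⟩
  rcases (hmax c' hc').lt_or_eq with h | h
  · left; simpa [readBefore, Prod.Lex.toLex_lt_toLex] using h
  · right; simpa [Prod.ext_iff] using h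

section LR

variable {A : SkewShape} {T : SkewSsyt A}

lemma card_filter_entry_le_eq_sum (T : SkewSsyt A) (k : ℕ) :
    #{c ∈ A.cells | T.entry c.1 c.2 ≤ k} = ∑ v ∈ range k, contentCount T (v + 1) := by
  induction k with
  | zero =>
    refine card_eq_zero.2 (filter_eq_empty_iff.2 fun c hc h => ?_)
    have := T.pos c.1 c.2 hc
    omega
  | succ k ih =>
    have hsplit : #{c ∈ A.cells | T.entry c.1 c.2 ≤ k + 1}
        = #{c ∈ A.cells | T.entry c.1 c.2 ≤ k} + #{c ∈ A.cells | T.entry c.1 c.2 = k + 1} :=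
      card_filter_eq_add _ (fun _ _ => by omega) (fun _ _ _ => by omega)
    rw [sum_range_succ, ← ih, hsplit, contentCount]

lemma HasContent.sum_take_eq {ν : List ℕ} (hν : HasContent T ν) (k : ℕ) :
    (ν.take k).sum = #{c ∈ A.cells | T.entry c.1 c.2 ≤ k} := by
  rw [List.sum_take_eq_sum_range_getD, card_filter_entry_le_eq_sum]
  exact sum_congr rfl fun v _ => (hν v).symm

/-- The lattice condition at the last box read in an initial segment `P` of the reading order
bounds the `v + 2`'s by the `v + 1`'s in `P`. -/
lemma IsLR.card_filter_entry_add_two_le (hT : IsLR T) (P : ℕ × ℕ → Prop) [DecidablePred P]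
    (hP : ∀ c ∈ A.cells, ∀ c' ∈ A.cells, P c → readBefore c' c → P c') (v : ℕ) :
    #{c ∈ A.cells | P c ∧ T.entry c.1 c.2 = v + 2}
      ≤ #{c ∈ A.cells | P c ∧ T.entry c.1 c.2 = v + 1} := by
  obtain hs | hs :=
    ({c ∈ A.cells | P c ∧ T.entry c.1 c.2 = v + 2} : Finset _).eq_empty_or_nonempty
  · rw [hs, card_empty]; exact Nat.zero_le _
  obtain ⟨c, hc, hlast⟩ := exists_last_read hs
  obtain ⟨hcA, hPc, hec⟩ := mem_filter.1 hc
  calc _ ≤ #{c' ∈ A.cells | T.entry c'.1 c'.2 = v + 2 ∧ (readBefore c' c ∨ c' = c)} :=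
        card_le_card <| monotone_filter_right _ fun c' hc' h =>
          ⟨h.2, hlast c' (mem_filter.2 ⟨hc', h⟩)⟩
    _ ≤ #{c' ∈ A.cells | T.entry c'.1 c'.2 = v + 1 ∧ readBefore c' c} := hT c hcA v hec
    _ ≤ _ := card_le_card <| monotone_filter_right _ fun c' hc' ⟨he, hr⟩ =>
          ⟨hP c hcA c' hc' hPc hr, he⟩

/-- The rows above row `i`, followed by the part of row `i` with entries at least `v + 2`, form
an initial segment of the reading order, since entries weakly increase along rows. -/
lemma IsLR.card_row_add_card_above_le (hT : IsLR T) (i v : ℕ) :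
    #{c ∈ A.cells | c.1 = i ∧ T.entry c.1 c.2 = v + 2}
      + #{c ∈ A.cells | c.1 < i ∧ T.entry c.1 c.2 = v + 2}
      ≤ #{c ∈ A.cells | c.1 < i ∧ T.entry c.1 c.2 = v + 1} := by
  have hP : ∀ c ∈ A.cells, ∀ c' ∈ A.cells,
      c.1 < i ∨ c.1 = i ∧ v + 2 ≤ T.entry c.1 c.2 → readBefore c' c →
      c'.1 < i ∨ c'.1 = i ∧ v + 2 ≤ T.entry c'.1 c'.2 := by
    rintro ⟨i₁, j₁⟩ hc ⟨i₂, j₂⟩ hc' hPc (hr | ⟨rfl, hj⟩)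
    · dsimp only at *; omega
    · have := T.row_weak i₂ j₁ j₂ hj.le hc hc'
      dsimp only at *; omega
  have hsplit : #{c ∈ A.cells | (c.1 < i ∨ c.1 = i ∧ v + 2 ≤ T.entry c.1 c.2) ∧
        T.entry c.1 c.2 = v + 2}
      = #{c ∈ A.cells | c.1 = i ∧ T.entry c.1 c.2 = v + 2}
        + #{c ∈ A.cells | c.1 < i ∧ T.entry c.1 c.2 = v + 2} :=
    card_filter_eq_add _ (fun _ _ => by omega) (fun _ _ _ => by omega)
  have hv1 : {c ∈ A.cells | (c.1 < i ∨ c.1 = i ∧ v + 2 ≤ T.entry c.1 c.2) ∧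
        T.entry c.1 c.2 = v + 1}
      = {c ∈ A.cells | c.1 < i ∧ T.entry c.1 c.2 = v + 1} :=
    filter_congr fun _ _ => by omega
  rw [← hsplit, ← hv1]
  exact hT.card_filter_entry_add_two_le _ hP v

lemma IsLR.card_row_gt_le (hT : IsLR T) (i v : ℕ) :
    #{c ∈ A.cells | c.1 = i ∧ v + 1 < T.entry c.1 c.2}
      ≤ #{c ∈ A.cells | c.1 < i ∧ T.entry c.1 c.2 = v + 1} := by
  have telescope : ∀ d,
      #{c ∈ A.cells | c.1 = i ∧ v + 1 < T.entry c.1 c.2 ∧ T.entry c.1 c.2 ≤ v + d + 1}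
      + #{c ∈ A.cells | c.1 < i ∧ T.entry c.1 c.2 = v + d + 1}
      ≤ #{c ∈ A.cells | c.1 < i ∧ T.entry c.1 c.2 = v + 1} := by
    intro d
    induction d with
    | zero =>
      rw [card_eq_zero.2 (filter_eq_empty_iff.2 fun _ _ => by omega)]
      simp
    | succ d ih =>
      have hsplit : #{c ∈ A.cells | c.1 = i ∧ v + 1 < T.entry c.1 c.2 ∧
            T.entry c.1 c.2 ≤ v + d + 2}
          = #{c ∈ A.cells | c.1 = i ∧ v + 1 < T.entry c.1 c.2 ∧ T.entry c.1 c.2 ≤ v + d + 1}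
            + #{c ∈ A.cells | c.1 = i ∧ T.entry c.1 c.2 = v + d + 2} :=
        card_filter_eq_add _ (fun _ _ => by omega) (fun _ _ _ => by omega)
      have := hT.card_row_add_card_above_le i (v + d)
      rw [show v + (d + 1) + 1 = v + d + 2 by ring, hsplit]
      omega
  let M := A.cells.sup fun c => T.entry c.1 c.2
  have hM := telescope M
  rw [filter_congr (q := fun c => c.1 = i ∧ v + 1 < T.entry c.1 c.2) fun c hc => by
    have : T.entry c.1 c.2 ≤ M := le_sup (f := fun c => T.entry c.1 c.2) hc
    omega] at hM
  omega

lemma IsLR.rowLength_add_card_le (hT : IsLR T) (i k : ℕ) :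
    A.rowLength i + #{c ∈ A.cells | c.1 < i ∧ T.entry c.1 c.2 ≤ k}
      ≤ #{c ∈ A.cells | c.1 < i + 1 ∧ T.entry c.1 c.2 ≤ k + 1} := by
  have hrow : A.rowLength i = #{c ∈ A.cells | c.1 = i ∧ T.entry c.1 c.2 ≤ k + 1}
      + #{c ∈ A.cells | c.1 = i ∧ k + 1 < T.entry c.1 c.2} := by
    rw [← card_filter_cells_row]
    exact card_filter_eq_add _ (fun _ _ => by omega) (fun _ _ _ => by omega)
  have hnext : #{c ∈ A.cells | c.1 < i + 1 ∧ T.entry c.1 c.2 ≤ k + 1}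
      = #{c ∈ A.cells | c.1 < i ∧ T.entry c.1 c.2 ≤ k}
        + #{c ∈ A.cells | c.1 < i ∧ T.entry c.1 c.2 = k + 1}
        + #{c ∈ A.cells | c.1 = i ∧ T.entry c.1 c.2 ≤ k + 1} := by
    rw [← card_filter_eq_add _ (fun _ _ => Iff.rfl) (fun _ _ _ => by omega),
      ← card_filter_eq_add _ (fun _ _ => Iff.rfl) (fun _ _ _ => by omega)]
    exact congrArg card (filter_congr fun _ _ => by omega)
  have := hT.card_row_gt_le i k
  omega

lemma IsLR.sum_le_card_filter_entry_le (hT : IsLR T) (n : ℕ) :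
    ∀ (k : ℕ) (u : Multiset ℕ), u ≤ (Multiset.range n).map A.rowLength → u.card ≤ k →
      u.sum ≤ #{c ∈ A.cells | c.1 < n ∧ T.entry c.1 c.2 ≤ k} := by
  induction n with
  | zero =>
    intro k u hu _
    simp [Multiset.le_zero.1 (by simpa using hu)]
  | succ n ih =>
    intro k u hu hk
    rw [Multiset.range_succ, Multiset.map_cons] at hu
    by_cases hmem : A.rowLength n ∈ u
    · obtain ⟨k, rfl⟩ : ∃ k', k = k' + 1 :=
        Nat.exists_eq_add_one.2 ((Multiset.card_pos_iff_exists_mem.2 ⟨_, hmem⟩).trans_le hk)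
      have hrest := ih k (u.erase (A.rowLength n)) (Multiset.erase_le_iff_le_cons.2 hu)
        (by rw [Multiset.card_erase_of_mem hmem, Nat.pred_eq_sub_one]; omega)
      calc u.sum = A.rowLength n + (u.erase (A.rowLength n)).sum := (Multiset.sum_erase hmem).symm
        _ ≤ A.rowLength n + #{c ∈ A.cells | c.1 < n ∧ T.entry c.1 c.2 ≤ k} := by omega
        _ ≤ _ := hT.rowLength_add_card_le n k
    · calc u.sum ≤ #{c ∈ A.cells | c.1 < n ∧ T.entry c.1 c.2 ≤ k} :=
            ih k u ((Multiset.le_cons_of_notMem hmem).1 hu) hk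
        _ ≤ _ := card_le_card <| monotone_filter_right _ fun _ _ h => ⟨by omega, h.2⟩

lemma IsLR.dom_rowsK_one (hT : IsLR T) {ν : List ℕ} (hν : HasContent T ν) :
    Dom (A.rowsK 1) ν := by
  intro k
  have hsub : (((A.rowsK 1).take k : List ℕ) : Multiset ℕ)
      ≤ (Multiset.range A.numRows).map A.rowLength :=
    Multiset.coe_le.2 <| (List.take_sublist _ _).subperm.trans <|
      rowsK_one_perm.subperm.trans List.filter_sublist.subperm
  have hall : {c ∈ A.cells | c.1 < A.numRows ∧ T.entry c.1 c.2 ≤ k}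
      = {c ∈ A.cells | T.entry c.1 c.2 ≤ k} :=
    filter_congr fun _ hc => and_iff_right (fst_lt_numRows hc)
  rw [hν.sum_take_eq, ← hall, ← Multiset.sum_coe]
  exact hT.sum_le_card_filter_entry_le _ k _ hsub (List.length_take_le _ _)

end LR

/-- sharpness of the lower bound, Remark `rem:extreme_fillings`.
For any skew shape `A`, the partition `rows(A)` (the weakly decreasing rearrangement of
the row lengths of `A`) lies in the support of `A` — i.e. `A` admits a Littlewood–
Richardson filling of content `rows(A)` — and it is the least dominant element of the
support: every partition `λ` in the support of `A` satisfies `rows(A) ⊴ λ`. -/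
theorem rows_mem_support_and_least_dominant (A : SkewShape) :
    A.rowsK 1 ∈ A.support ∧ ∀ lam ∈ A.support, Dom (A.rowsK 1) lam :=
  ⟨⟨rowsK_one_pairwise, canonicalFilling A, canonicalFilling_isLR A,
      canonicalFilling_hasContent A⟩,
    fun _ ⟨_, _, hT, hν⟩ => hT.dom_rowsK_one hν⟩
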